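/- arXiv:math/0212236 — 3 statements merged into one kernel-verified Lean document; each statement's English description precedes it below -/
import Mathlib

section
/- Let G be a locally compact Hausdorff topological group which is unimodular, let K ≤ G be a compact open subgroup, and let t ∈ G. Let μ_G be a Haar measure on G and μ_K a Haar measure on K. Then for every continuous compactly supported function f : G → ℝ whose support is contained in KtK, one has μ_G(KtK) · ∫_{K×K} f(k₁ t k₂) dμ_K(k₁) dμ_K(k₂) = μ_K(K)² · ∫_G f(g) dμ_G(g). (Equivalently, the constant c(KtK) in the Cartier integration formula satisfies c(KtK) · μ_K(K)² = μ_G(KtK).) -/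
/-!
Put `Φ g = ∫ k₁, ∫ k₂, f (k₁ * g * k₂)`. Right invariance of `μK` in `k₁` and left invariance
in `k₂` make `Φ` constant on `KtK`, equal to the double integral `c` of the statement, and `Φ`
vanishes off `KtK` because `f` is supported there; so `∫ Φ dμG = μG(KtK) * c`. Integrating in
`g` first instead (Fubini for continuous compactly supported integrands, which needs no
σ-finiteness), bi-invariance of `μG` turns every inner integral into `∫ f dμG`, so
`∫ Φ dμG = μK(K)² * ∫ f dμG`. The Haar measure `μK` is right invariant because a right
translate of it is again a Haar measure with the same finite total mass.
-/

open MeasureTheory Pointwise Set DoubleCoset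

namespace MeasureTheory.Measure

lemma isMulRightInvariant_of_compactSpace {G : Type*} [Group G] [TopologicalSpace G]
    [IsTopologicalGroup G] [CompactSpace G] [MeasurableSpace G] [BorelSpace G]
    (μ : Measure G) [μ.IsHaarMeasure] : μ.IsMulRightInvariant := by
  refine ⟨fun g => ?_⟩
  have hsmul := isMulInvariant_eq_smul_of_compactSpace (μ.map (· * g)) μ
  have hfactor : haarScalarFactor (μ.map (· * g)) μ = 1 := by
    have huniv := congrArg (fun ν : Measure G => ν univ) hsmul
    simp only [map_apply (measurable_mul_const g) .univ, preimage_univ, smul_apply,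
      ENNReal.smul_def, smul_eq_mul] at huniv
    exact_mod_cast ((ENNReal.mul_eq_right (NeZero.ne (μ univ)) (measure_ne_top μ univ)).1
      huniv.symm)
  rw [hsmul, hfactor, one_smul]

end MeasureTheory.Measure

lemma continuous_integral_of_compactSpace {X Y E : Type*} [TopologicalSpace X]
    [TopologicalSpace Y] [CompactSpace Y] [MeasurableSpace Y] [OpensMeasurableSpace Y]
    [NormedAddCommGroup E] [NormedSpace ℝ E] {μ : Measure Y} [IsFiniteMeasure μ]
    {f : X → Y → E} (hf : Continuous (Function.uncurry f)) :
    Continuous fun x => ∫ y, f x y ∂μ :=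
  continuousOn_univ.1 <| continuousOn_integral_of_compact_support isCompact_univ
    hf.continuousOn fun _ _ _ hy => absurd (mem_univ _) hy

lemma hasCompactSupport_uncurry_of_compactSpace {X Y E : Type*} [TopologicalSpace X]
    [TopologicalSpace Y] [CompactSpace Y] [R1Space X] [R1Space Y] [Zero E] {f : X → Y → E}
    {s : Set X} (hs : IsCompact s) (hf : ∀ x ∉ s, ∀ y, f x y = 0) :
    HasCompactSupport (Function.uncurry f) :=
  .intro (hs.prod isCompact_univ) fun p hp => hf p.1 (fun h => hp ⟨h, mem_univ _⟩) p.2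

section DoubleCoset

variable {G E : Type*} [Group G] {H K : Subgroup G}

lemma mul_mul_mem_doubleCoset_iff {a b g t : G} (ha : a ∈ H) (hb : b ∈ K) :
    a * g * b ∈ doubleCoset t H K ↔ g ∈ doubleCoset t H K := by
  simp only [mem_doubleCoset]
  constructor
  · rintro ⟨x, hx, y, hy, h⟩
    refine ⟨a⁻¹ * x, mul_mem (inv_mem ha) hx, y * b⁻¹, mul_mem hy (inv_mem hb), ?_⟩
    calc g = a⁻¹ * (a * g * b) * b⁻¹ := by group
      _ = _ := by rw [h]; group
  · rintro ⟨x, hx, y, hy, rfl⟩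
    exact ⟨a * x, mul_mem ha hx, y * b, mul_mem hy hb, by group⟩

lemma apply_mul_mul_eq_zero_of_tsupport_subset [TopologicalSpace G] [Zero E] {f : G → E}
    {t g : G} (hf : tsupport f ⊆ doubleCoset t H K) (hg : g ∉ doubleCoset t H K) (h : H) (k : K) :
    f (h * g * k) = 0 :=
  by_contra fun hne => hg ((mul_mul_mem_doubleCoset_iff h.2 k.2).1 (hf (subset_tsupport f hne)))

lemma apply_mul_mul_eq_zero_of_notMem [TopologicalSpace G] [Zero E] {f : G → E} {g : G}
    (hg : g ∉ (H : Set G) * tsupport f * K) (h : H) (k : K) : f (h * g * k) = 0 := by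
  by_contra hne
  refine hg ⟨_, ⟨(h : G)⁻¹, inv_mem h.2, _, subset_tsupport f hne, rfl⟩, (k : G)⁻¹, inv_mem k.2,
    by group⟩

end DoubleCoset

section Integral

variable {G E : Type*} [Group G] [TopologicalSpace G] [IsTopologicalGroup G] [MeasurableSpace G]
  [BorelSpace G] [NormedAddCommGroup E] [NormedSpace ℝ E] {H K : Subgroup G}
  (μH : Measure H) (μK : Measure K)

lemma integral_integral_mul_mul_of_mem_doubleCoset [μH.IsMulRightInvariant]
    [μK.IsMulLeftInvariant] (f : G → E) {g t : G} (hg : g ∈ doubleCoset t H K) :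
    ∫ h, ∫ k, f (h * g * k) ∂μK ∂μH = ∫ h, ∫ k, f (h * t * k) ∂μK ∂μH := by
  obtain ⟨a, ha, b, hb, rfl⟩ := mem_doubleCoset.1 hg
  calc ∫ h, ∫ k, f (h * (a * t * b) * k) ∂μK ∂μH
      = ∫ h, ∫ k, f (↑(h * ⟨a, ha⟩) * t * ↑(⟨b, hb⟩ * k)) ∂μK ∂μH := by
        simp only [Subgroup.coe_mul, mul_assoc]
    _ = ∫ h, ∫ k, f (↑(h * ⟨a, ha⟩) * t * k) ∂μK ∂μH := by
        congr 1 with h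
        exact integral_mul_left_eq_self (μ := μK) (fun k => f (↑(h * ⟨a, ha⟩) * t * k)) _
    _ = ∫ h, ∫ k, f (h * t * k) ∂μK ∂μH :=
        integral_mul_right_eq_self (μ := μH) (fun h => ∫ k, f (h * t * k) ∂μK) _

lemma integral_integral_mul_mul_eq_indicator [μH.IsMulRightInvariant]
    [μK.IsMulLeftInvariant] {f : G → E} {t : G} (hf : tsupport f ⊆ doubleCoset t H K) :
    (fun g => ∫ h, ∫ k, f (h * g * k) ∂μK ∂μH) =
      (doubleCoset t H K).indicator fun _ => ∫ h, ∫ k, f (h * t * k) ∂μK ∂μH := by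
  ext g
  by_cases hg : g ∈ doubleCoset t H K
  · rw [indicator_of_mem hg, integral_integral_mul_mul_of_mem_doubleCoset μH μK f hg]
  · simp only [indicator_of_notMem hg, apply_mul_mul_eq_zero_of_tsupport_subset hf hg,
      integral_zero]

variable [CompleteSpace E]

lemma integral_integral_integral_mul_mul (μG : Measure G) [μG.IsMulLeftInvariant]
    [μG.IsMulRightInvariant] [IsFiniteMeasureOnCompacts μG] [IsFiniteMeasure μH]
    [IsFiniteMeasure μK] (hH : IsCompact (H : Set G)) (hK : IsCompact (K : Set G))
    {f : G → E} (hf : Continuous f) (hfc : HasCompactSupport f) :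
    ∫ g, ∫ h, ∫ k, f (h * g * k) ∂μK ∂μH ∂μG =
      ((μH univ).toReal * (μK univ).toReal) • ∫ g, f g ∂μG := by
  have : CompactSpace H := isCompact_iff_compactSpace.1 hH
  have : CompactSpace K := isCompact_iff_compactSpace.1 hK
  have hsupp : IsCompact ((H : Set G) * tsupport f * (K : Set G)) := (hH.mul hfc).mul hK
  have hcont : Continuous fun p : (G × H) × K => f (p.1.2 * p.1.1 * p.2) := by fun_prop
  calc ∫ g, ∫ h, ∫ k, f (h * g * k) ∂μK ∂μH ∂μG
      = ∫ h, ∫ g, ∫ k, f (h * g * k) ∂μK ∂μG ∂μH := by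
        refine integral_integral_swap_of_hasCompactSupport
          (continuous_integral_of_compactSpace hcont) ?_
        refine hasCompactSupport_uncurry_of_compactSpace hsupp fun g hg h => ?_
        simp only [apply_mul_mul_eq_zero_of_notMem hg, integral_zero]
    _ = ∫ h, ∫ k, ∫ g, f (h * g * k) ∂μG ∂μK ∂μH := by
        congr 1 with h
        exact integral_integral_swap_of_hasCompactSupport (by fun_prop) <|
          hasCompactSupport_uncurry_of_compactSpace hsupp fun g hg =>
            apply_mul_mul_eq_zero_of_notMem hg h
    _ = ∫ h : H, ∫ k : K, ∫ g, f g ∂μG ∂μK ∂μH := by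
        congr 1 with h
        congr 1 with k
        rw [integral_mul_left_eq_self (fun g => f (g * k)), integral_mul_right_eq_self]
    _ = ((μH univ).toReal * (μK univ).toReal) • ∫ g, f g ∂μG := by
        simp only [integral_const, measureReal_def, smul_smul]

end Integral

theorem cartier_double_coset_constant_general
    {G : Type*} [Group G] [TopologicalSpace G] [IsTopologicalGroup G]
    [T2Space G] [MeasurableSpace G] [BorelSpace G]
    (μG : Measure G) [μG.IsHaarMeasure] [μG.IsMulRightInvariant]
    (K : Subgroup G) (hKc : IsCompact (K : Set G))
    (μK : Measure K) [μK.IsHaarMeasure]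
    (t : G) :
    ∀ f : G → ℝ, Continuous f → HasCompactSupport f →
      tsupport f ⊆ (K : Set G) * {t} * (K : Set G) →
      (μG ((K : Set G) * {t} * (K : Set G))).toReal *
          (∫ k₁ : K, ∫ k₂ : K, f ((k₁ : G) * t * (k₂ : G)) ∂μK ∂μK) =
        ((μK Set.univ).toReal) ^ 2 * ∫ g, f g ∂μG := by
  intro f hf hfc hfs
  have : CompactSpace K := isCompact_iff_compactSpace.1 hKc
  have : μK.IsMulRightInvariant := Measure.isMulRightInvariant_of_compactSpace μK
  have hS : IsCompact (doubleCoset t K K) := (hKc.mul isCompact_singleton).mul hKc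
  calc (μG (doubleCoset t K K)).toReal * (∫ k₁ : K, ∫ k₂ : K, f (k₁ * t * k₂) ∂μK ∂μK)
      = ∫ g, (doubleCoset t K K).indicator
          (fun _ => ∫ k₁ : K, ∫ k₂ : K, f (k₁ * t * k₂) ∂μK ∂μK) g ∂μG := by
        rw [integral_indicator_const _ hS.measurableSet, smul_eq_mul, measureReal_def]
    _ = ∫ g, ∫ k₁ : K, ∫ k₂ : K, f (k₁ * g * k₂) ∂μK ∂μK ∂μG := by
        rw [← integral_integral_mul_mul_eq_indicator μK μK hfs]
    _ = ((μK Set.univ).toReal) ^ 2 * ∫ g, f g ∂μG := by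
        rw [integral_integral_integral_mul_mul μK μK μG hKc hKc hf hfc, smul_eq_mul, sq]

/-- **The constant in the Cartier integration formula.**
With `G` locally compact Hausdorff unimodular, `K ≤ G` compact open, `t ∈ G`, `μG` a Haar
measure on `G` and `μK` a Haar measure on `K`: for every continuous compactly supported
`f : G → ℝ` supported in `KtK`,
`μG(KtK) * ∫_{K×K} f(k₁ t k₂) dμK dμK = μK(K)² * ∫_G f dμG`.
(Equivalently, the constant `c(KtK)` satisfies `c(KtK) * μK(K)² = μG(KtK)`.) -/
theorem cartier_double_coset_constant
    {G : Type*} [Group G] [TopologicalSpace G] [IsTopologicalGroup G]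
    [LocallyCompactSpace G] [T2Space G] [MeasurableSpace G] [BorelSpace G]
    (μG : Measure G) [μG.IsHaarMeasure] [μG.IsMulRightInvariant]
    (K : Subgroup G) (hKc : IsCompact (K : Set G)) (hKo : IsOpen (K : Set G))
    (μK : Measure K) [μK.IsHaarMeasure]
    (t : G) :
    ∀ f : G → ℝ, Continuous f → HasCompactSupport f →
      tsupport f ⊆ (K : Set G) * {t} * (K : Set G) →
      (μG ((K : Set G) * {t} * (K : Set G))).toReal *
          (∫ k₁ : K, ∫ k₂ : K, f ((k₁ : G) * t * (k₂ : G)) ∂μK ∂μK) =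
        ((μK Set.univ).toReal) ^ 2 * ∫ g, f g ∂μG :=
  cartier_double_coset_constant_general μG K hKc μK t
end

section
/- Let G be a locally compact Hausdorff topological group which is unimodular, K ≤ G a compact open subgroup, and μ_G a Haar measure on G; let μ_K be the restriction of μ_G to K (so μ_K(K) = μ_G(K) > 0). Let t₁, …, t_r ∈ G be elements whose double cosets K t_i K are pairwise disjoint, and let f : G → ℝ be a continuous compactly supported function whose support is contained in the union ⋃_{i=1}^{r} K t_i K. Then ∫_G f(g) dμ_G(g) = ∑_{i=1}^{r} [K t_i K : K] · μ_K(K)^{-1} · ∫_{K×K} f(k₁ t_i k₂) dμ_K(k₁) dμ_K(k₂). -/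
open MeasureTheory Pointwise

/-! Let `x₀ = tK ∈ G ⧸ K`. The `K`-orbit of `x₀` is the finite set of left cosets contained in
`KtK`, and the fibres of `k ↦ k • x₀` on `K` are left translates of `K ∩ Stab(x₀)`, so they all
have measure `μ(K) / [KtK : K]`. Since `∫_K f(k₁ t k₂) dk₂ = ∫_{k₁tK} f` depends only on
`k₁ • x₀`, the double integral is `μ(K) / [KtK : K]` times the sum of `∫_{gK} f` over the cosets
`gK ⊆ KtK`, that is, times `∫_{KtK} f`. Summing over the disjoint double cosets gives the
formula. -/

section OrbitStabilizer

variable {G X : Type*} [Group G] [MulAction G X]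

theorem Subgroup.inter_preimage_smul_eq_smul_inter_stabilizer (H : Subgroup G) (x₀ : X)
    {h : G} (hh : h ∈ H) :
    (H : Set G) ∩ (· • x₀) ⁻¹' {h • x₀} = h • ((H : Set G) ∩ MulAction.stabilizer G x₀) := by
  ext k
  simp [Set.mem_smul_set_iff_inv_smul_mem, mul_smul, inv_smul_eq_iff,
    H.mul_mem_cancel_left (H.inv_mem hh)]

variable [MeasurableSpace G] [MeasurableMul G] (μ : Measure G) [μ.IsMulLeftInvariant]

theorem card_image_smul_mul_setIntegral_comp_smul (H : Subgroup G) (x₀ : X)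
    (hO : ((· • x₀) '' (H : Set G)).Finite)
    (hstab : MeasurableSet ((H : Set G) ∩ MulAction.stabilizer G x₀)) (hH : μ H ≠ ⊤)
    (φ : X → ℝ) :
    Nat.card ((· • x₀) '' (H : Set G)) * ∫ k in H, φ (k • x₀) ∂μ =
      μ.real H * ∑ q ∈ hO.toFinset, φ q := by
  set F : X → Set G := fun q => (H : Set G) ∩ (· • x₀) ⁻¹' {q}
  set m := μ.real ((H : Set G) ∩ MulAction.stabilizer G x₀)
  have hF : ∀ q ∈ hO.toFinset, MeasurableSet (F q) ∧ μ.real (F q) = m := by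
    intro q hq
    obtain ⟨h, hh, rfl⟩ := hO.mem_toFinset.1 hq
    simp only [F, H.inter_preimage_smul_eq_smul_inter_stabilizer x₀ hh]
    exact ⟨hstab.const_smul h, by simp only [m, measureReal_def, measure_smul]⟩
  have hF_top : ∀ q, μ (F q) ≠ ⊤ := fun q =>
    ne_top_of_le_ne_top hH (measure_mono Set.inter_subset_left)
  have hF_disj : Set.PairwiseDisjoint (hO.toFinset : Set X) F := fun q _ q' _ hqq' =>
    Set.disjoint_left.2 fun k hk hk' => hqq' (hk.2.symm.trans hk'.2)
  have hH_cover : (H : Set G) = ⋃ q ∈ hO.toFinset, F q := by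
    ext k
    simp only [F, Set.mem_iUnion, Set.Finite.mem_toFinset, Set.mem_image, Set.mem_inter_iff,
      Set.mem_preimage, Set.mem_singleton_iff, exists_prop]
    exact ⟨fun hk => ⟨_, ⟨k, hk, rfl⟩, hk, rfl⟩, fun ⟨_, _, hk, _⟩ => hk⟩
  have hμH : μ.real H = hO.toFinset.card * m := by
    conv_lhs => rw [hH_cover]
    rw [measureReal_biUnion_finset hF_disj (fun q hq => (hF q hq).1) (fun q _ => hF_top q),
      Finset.sum_congr rfl fun q hq => (hF q hq).2, Finset.sum_const, nsmul_eq_mul]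
  have hintegral : ∫ k in H, φ (k • x₀) ∂μ = m * ∑ q ∈ hO.toFinset, φ q := by
    conv_lhs => rw [hH_cover]
    rw [integral_biUnion_finset _ (fun q hq => (hF q hq).1) hF_disj
      fun q hq => (integrableOn_const (C := φ q) (hF_top q)).congr_fun
        (fun k hk => congrArg φ (hk.2 : k • x₀ = q).symm) (hF q hq).1, Finset.mul_sum]
    refine Finset.sum_congr rfl fun q hq => ?_
    rw [setIntegral_congr_fun (g := fun _ => φ q) (hF q hq).1
      fun k hk => congrArg φ (hk.2 : k • x₀ = q), setIntegral_const,
      (hF q hq).2, smul_eq_mul]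
  rw [hintegral, hμH, Nat.card_eq_card_finite_toFinset hO]
  ring

end OrbitStabilizer

section Quotient

variable {G : Type*} [Group G] (K : Subgroup G)

theorem QuotientGroup.preimage_mk_singleton_mk (g : G) :
    (QuotientGroup.mk : G → G ⧸ K) ⁻¹' {(g : G ⧸ K)} = g • (K : Set G) := by
  rw [← Set.image_singleton, preimage_image_mk_eq_mul, Set.singleton_mul]
  rfl

theorem QuotientGroup.image_mk_doubleCoset (t : G) :
    (QuotientGroup.mk : G → G ⧸ K) '' ((K : Set G) * {t} * (K : Set G)) =
      (· • (t : G ⧸ K)) '' (K : Set G) := by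
  ext q
  simp only [Set.mem_image, Set.mem_mul, Set.mem_singleton_iff, SetLike.mem_coe]
  constructor
  · rintro ⟨_, ⟨_, ⟨k, hk, _, rfl, rfl⟩, k', hk', rfl⟩, rfl⟩
    exact ⟨k, hk, by simp [mk_mul_of_mem _ hk']⟩
  · rintro ⟨k, hk, rfl⟩
    exact ⟨k * t * 1, ⟨k * t, ⟨k, hk, t, rfl, rfl⟩, 1, K.one_mem, rfl⟩, by simp⟩

end Quotient

theorem setIntegral_comp_mul_left {G E : Type*} [Group G] [MeasurableSpace G] [MeasurableMul G]
    [NormedAddCommGroup E] [NormedSpace ℝ E] (μ : Measure G) [μ.IsMulLeftInvariant]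
    (g : G) (f : G → E) (s : Set G) :
    ∫ x in s, f (g * x) ∂μ = ∫ x in g • s, f x ∂μ := by
  rw [← (measurePreserving_mul_left μ g).setIntegral_image_emb
    (MeasurableEquiv.mulLeft g).measurableEmbedding f s]
  rfl

theorem setIntegral_preimage_finset {α β E : Type*} [MeasurableSpace α] [NormedAddCommGroup E]
    [NormedSpace ℝ E] {μ : Measure α}
    (π : α → β) (O : Finset β) (hπ : ∀ q ∈ O, MeasurableSet (π ⁻¹' {q})) {f : α → E}
    (hf : IntegrableOn f (π ⁻¹' O) μ) :
    ∫ x in π ⁻¹' O, f x ∂μ = ∑ q ∈ O, ∫ x in π ⁻¹' {q}, f x ∂μ := by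
  rw [← Set.biUnion_preimage_singleton] at hf ⊢
  refine integral_biUnion_finset O hπ (fun q _ q' _ h => ?_) fun q hq => hf.mono_set ?_
  · exact Set.disjoint_singleton.2 h |>.preimage π
  · exact Set.subset_biUnion_of_mem (u := fun q => π ⁻¹' {q}) hq

theorem setIntegral_doubleCoset {G : Type*} [Group G] [TopologicalSpace G]
    [IsTopologicalGroup G] [MeasurableSpace G] [BorelSpace G]
    (μ : Measure G) [μ.IsHaarMeasure] (K : Subgroup G) (hKc : IsCompact (K : Set G))
    (hKo : IsOpen (K : Set G)) (t : G) {f : G → ℝ}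
    (hf : IntegrableOn f ((K : Set G) * {t} * (K : Set G)) μ) :
    ∫ g in (K : Set G) * {t} * (K : Set G), f g ∂μ =
      (Nat.card ((QuotientGroup.mk : G → G ⧸ K) '' ((K : Set G) * {t} * (K : Set G))) : ℝ) *
        (μ (K : Set G)).toReal⁻¹ *
        ∫ k₁ in (K : Set G), ∫ k₂ in (K : Set G), f (k₁ * t * k₂) ∂μ ∂μ := by
  have := QuotientGroup.discreteTopology hKo
  set x₀ : G ⧸ K := (t : G ⧸ K)
  set φ : G ⧸ K → ℝ := fun q => ∫ g in QuotientGroup.mk ⁻¹' {q}, f g ∂μ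
  have hcont : Continuous fun g : G => g • x₀ := by fun_prop
  have hO : ((· • x₀) '' (K : Set G)).Finite := (hKc.image hcont).finite_of_discrete
  have hstab : MeasurableSet ((K : Set G) ∩ MulAction.stabilizer G x₀) :=
    (hKo.inter ((isOpen_discrete {x₀}).preimage hcont)).measurableSet
  have hdoubleCoset :
      (K : Set G) * {t} * (K : Set G) = QuotientGroup.mk ⁻¹' (hO.toFinset : Set (G ⧸ K)) := by
    rw [hO.coe_toFinset, ← QuotientGroup.image_mk_doubleCoset,
      QuotientGroup.preimage_image_mk_eq_mul, mul_assoc _ (K : Set G), coe_mul_coe]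
  have hinner : ∀ k, ∫ k₂ in (K : Set G), f (k * t * k₂) ∂μ = φ (k • x₀) := fun k => by
    rw [setIntegral_comp_mul_left, ← QuotientGroup.preimage_mk_singleton_mk]
    rfl
  have hμK : μ.real (K : Set G) ≠ 0 :=
    ENNReal.toReal_ne_zero.2 ⟨(hKo.measure_pos μ ⟨1, K.one_mem⟩).ne', hKc.measure_ne_top⟩
  have key := card_image_smul_mul_setIntegral_comp_smul μ K x₀ hO hstab hKc.measure_ne_top φ
  calc ∫ g in (K : Set G) * {t} * (K : Set G), f g ∂μ = ∑ q ∈ hO.toFinset, φ q := by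
        rw [hdoubleCoset] at hf ⊢
        exact setIntegral_preimage_finset _ _
          (fun q _ => ((isOpen_discrete {q}).preimage continuous_quotient_mk').measurableSet) hf
    _ = (μ.real K)⁻¹ * (μ.real K * ∑ q ∈ hO.toFinset, φ q) := (inv_mul_cancel_left₀ hμK _).symm
    _ = _ := by
      rw [← key, QuotientGroup.image_mk_doubleCoset]
      simp_rw [hinner, measureReal_def]
      ring

theorem integration_formula_over_double_cosets_general
    {G : Type*} [Group G] [TopologicalSpace G] [IsTopologicalGroup G]
    [MeasurableSpace G] [BorelSpace G]
    (μG : Measure G) [μG.IsHaarMeasure]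
    (K : Subgroup G) (hKc : IsCompact (K : Set G)) (hKo : IsOpen (K : Set G))
    (r : ℕ) (t : Fin r → G)
    (hdisj : Pairwise fun i j =>
      Disjoint ((K : Set G) * {t i} * (K : Set G)) ((K : Set G) * {t j} * (K : Set G)))
    (f : G → ℝ) (hf : Continuous f)
    (hsupp : tsupport f ⊆ ⋃ i, (K : Set G) * {t i} * (K : Set G)) :
    ∫ g, f g ∂μG =
      ∑ i : Fin r,
        (Nat.card ((QuotientGroup.mk : G → G ⧸ K) ''
            ((K : Set G) * {t i} * (K : Set G))) : ℝ) *
          ((μG (K : Set G)).toReal)⁻¹ *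
          ∫ k₁ in (K : Set G), ∫ k₂ in (K : Set G), f (k₁ * t i * k₂) ∂μG ∂μG := by
  have hintegrable : ∀ i, IntegrableOn f ((K : Set G) * {t i} * (K : Set G)) μG := fun _ =>
    hf.continuousOn.integrableOn_compact' ((hKc.mul isCompact_singleton).mul hKc)
      hKo.mul_left.measurableSet
  calc ∫ g, f g ∂μG = ∫ g in ⋃ i, (K : Set G) * {t i} * (K : Set G), f g ∂μG :=
        (setIntegral_eq_integral_of_forall_compl_eq_zero fun g hg =>
          image_eq_zero_of_notMem_tsupport fun hg' => hg (hsupp hg')).symm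
    _ = ∑ i, ∫ g in (K : Set G) * {t i} * (K : Set G), f g ∂μG :=
        integral_iUnion_fintype (fun _ => hKo.mul_left.measurableSet) hdisj hintegrable
    _ = _ := Finset.sum_congr rfl fun i _ =>
        setIntegral_doubleCoset μG K hKc hKo (t i) (hintegrable i)

/-- **Integration formula over a finite union of double cosets.**
Let `G` be a locally compact Hausdorff unimodular topological group, `K ≤ G` a compact
open subgroup, `μG` a Haar measure on `G`, and let `μK` be the restriction of `μG` to `K`
(formalized by set integrals over `K` against `μG`). Let `t₁, …, t_r ∈ G` have pairwise
disjoint double cosets `K tᵢ K`, and let `f : G → ℝ` be continuous compactly supported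
with support in `⋃ᵢ K tᵢ K`. Then
`∫_G f dμG = ∑ᵢ [K tᵢ K : K] * μK(K)⁻¹ * ∫_{K×K} f(k₁ tᵢ k₂) dμK dμK`,
where `[K tᵢ K : K]` is the number of left cosets of `K` contained in `K tᵢ K`. -/
theorem integration_formula_over_double_cosets
    {G : Type*} [Group G] [TopologicalSpace G] [IsTopologicalGroup G]
    [LocallyCompactSpace G] [T2Space G] [MeasurableSpace G] [BorelSpace G]
    (μG : Measure G) [μG.IsHaarMeasure] [μG.IsMulRightInvariant]
    (K : Subgroup G) (hKc : IsCompact (K : Set G)) (hKo : IsOpen (K : Set G))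
    (r : ℕ) (t : Fin r → G)
    (hdisj : Pairwise fun i j =>
      Disjoint ((K : Set G) * {t i} * (K : Set G)) ((K : Set G) * {t j} * (K : Set G)))
    (f : G → ℝ) (hf : Continuous f) (hfc : HasCompactSupport f)
    (hsupp : tsupport f ⊆ ⋃ i, (K : Set G) * {t i} * (K : Set G)) :
    ∫ g, f g ∂μG =
      ∑ i : Fin r,
        (Nat.card ((QuotientGroup.mk : G → G ⧸ K) ''
            ((K : Set G) * {t i} * (K : Set G))) : ℝ) *
          ((μG (K : Set G)).toReal)⁻¹ *
          ∫ k₁ in (K : Set G), ∫ k₂ in (K : Set G), f (k₁ * t i * k₂) ∂μG ∂μG :=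
  integration_formula_over_double_cosets_general μG K hKc hKo r t hdisj f hf hsupp
end

section
/- Fix a prime p and n ≥ 1. Let X ∈ M_n(ℚ_p) be a matrix whose characteristic polynomial is irreducible over ℚ_p (such an X is regular semisimple and elliptic), and let D ⊆ M_n(ℚ_p) be a compact subset. Then the set {g ∈ SL_n(ℚ_p) : g⁻¹ X g ∈ D} is a compact subset of SL_n(ℚ_p). In particular, it is contained in a finite union of double cosets K g K, where K = SL_n(ℤ_p). -/
open Pointwise

noncomputable instance (p : ℕ) [Fact p.Prime] (n : ℕ) :
    TopologicalSpace (Matrix.SpecialLinearGroup (Fin n) ℚ_[p]) :=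
  inferInstanceAs (TopologicalSpace {A : Matrix (Fin n) (Fin n) ℚ_[p] // A.det = 1})

open Polynomial Matrix Filter

private theorem orbital_pow_intertwine {K : Type*} [Field K] {n : ℕ}
    (X Y h : Matrix (Fin n) (Fin n) K)
    (hcomm : X * h = h * Y) : ∀ k : ℕ, X ^ k * h = h * Y ^ k := by
  intro k
  induction k with
  | zero => simp
  | succ k ih => rw [pow_succ, pow_succ, mul_assoc, hcomm, ← mul_assoc, ih, mul_assoc]

private theorem orbital_no_singular_intertwiner (p : ℕ) [Fact p.Prime] (n : ℕ) (hn : 1 ≤ n)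
    (X : Matrix (Fin n) (Fin n) ℚ_[p]) (hX : Irreducible X.charpoly)
    (h Y : Matrix (Fin n) (Fin n) ℚ_[p]) (hcomm : X * h = h * Y)
    (hdet : h.det = 0) (hne : h ≠ 0) : False := by
  classical
  obtain ⟨i, j, hij⟩ : ∃ i j, h i j ≠ 0 := by
    by_contra hc; push_neg at hc; exact hne (by ext i j; simp [hc])
  set v : Fin n → ℚ_[p] := h.mulVec (Pi.single j 1) with hv
  have hvne : v ≠ 0 := by
    intro h0
    have : v i = 0 := by rw [h0]; rfl
    rw [hv, Matrix.mulVec_single] at this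
    simp at this
    exact hij this
  clear_value v
  have hdegc : X.charpoly.natDegree = n := by
    rw [Matrix.charpoly_natDegree_eq_dim, Fintype.card_fin]
  have key : ∀ f : Polynomial ℚ_[p], f.natDegree < n → (aeval X f).mulVec v = 0 → f = 0 := by
    intro f hdeg hev
    by_contra hf
    have hndvd : ¬ X.charpoly ∣ f := fun hd =>
      absurd (Polynomial.natDegree_le_of_dvd hd hf) (by omega)
    obtain ⟨u, w, huw⟩ := (hX.coprime_iff_not_dvd.mpr hndvd)
    have h1 := congrArg (aeval X) huw
    rw [map_add, _root_.map_mul, _root_.map_mul, Matrix.aeval_self_charpoly, mul_zero, zero_add,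
      _root_.map_one] at h1
    apply hvne
    calc v = ((aeval X w) * (aeval X f)).mulVec v := by rw [h1, Matrix.one_mulVec]
    _ = (aeval X w).mulVec ((aeval X f).mulVec v) := (Matrix.mulVec_mulVec _ _ _).symm
    _ = 0 := by rw [hev, Matrix.mulVec_zero]
  have li : LinearIndependent ℚ_[p] (fun k : Fin n => (X ^ (k : ℕ)).mulVec v) := by
    rw [Fintype.linearIndependent_iff]
    intro a ha k
    set f : Polynomial ℚ_[p] := ∑ m : Fin n, Polynomial.C (a m) * Polynomial.X ^ (m : ℕ) with hf
    have hdeg : f.natDegree < n := by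
      have : f.natDegree ≤ n - 1 := Polynomial.natDegree_sum_le_of_forall_le _ _ (fun m _ => by
        apply le_trans (Polynomial.natDegree_C_mul_le _ _)
        rw [Polynomial.natDegree_X_pow]; omega)
      omega
    have sum_mulVec : ∀ (s : Finset (Fin n)),
        (∑ m ∈ s, a m • X ^ (m : ℕ)).mulVec v = ∑ m ∈ s, a m • (X ^ (m : ℕ)).mulVec v := by
      intro s
      induction s using Finset.induction with
      | empty => simp [Matrix.zero_mulVec]
      | @insert _ _ hm ih =>
        rw [Finset.sum_insert hm, Finset.sum_insert hm, Matrix.add_mulVec,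
          Matrix.smul_mulVec, ih]
    have hev : (aeval X f).mulVec v = 0 := by
      rw [hf, map_sum]
      have h2 : (∑ m : Fin n, aeval X (Polynomial.C (a m) * Polynomial.X ^ (m : ℕ))) =
          ∑ m : Fin n, a m • X ^ (m : ℕ) := by
        refine Finset.sum_congr rfl fun m _ => ?_
        rw [_root_.map_mul, aeval_C, map_pow, aeval_X, Algebra.algebraMap_eq_smul_one,
          smul_mul_assoc, one_mul]
      rw [h2, sum_mulVec, ha]
    have hf0 := key f hdeg hev
    have h3 : f.coeff (k : ℕ) = a k := by
      rw [hf, Polynomial.finset_sum_coeff]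
      simp only [Polynomial.coeff_C_mul, Polynomial.coeff_X_pow, Fin.val_eq_val]
      simp [Finset.sum_ite_eq']
    rw [hf0] at h3
    simpa using h3.symm
  have hspan : Submodule.span ℚ_[p] (Set.range fun k : Fin n => (X ^ (k : ℕ)).mulVec v) = ⊤ := by
    have : Nonempty (Fin n) := ⟨⟨0, hn⟩⟩
    exact li.span_eq_top_of_card_eq_finrank (by simp [Module.finrank_fin_fun])
  have hrange : LinearMap.range h.mulVecLin = ⊤ := by
    rw [eq_top_iff, ← hspan, Submodule.span_le]
    rintro _ ⟨k, rfl⟩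
    refine ⟨(Y ^ (k : ℕ)).mulVec (Pi.single j 1), ?_⟩
    rw [Matrix.mulVecLin_apply, Matrix.mulVec_mulVec,
      ← orbital_pow_intertwine X Y h hcomm, hv]
    exact (Matrix.mulVec_mulVec _ _ _).symm
  have hsurj := LinearMap.range_eq_top.mp hrange
  obtain ⟨w, hw0, hwh⟩ := Matrix.exists_vecMul_eq_zero_iff.mpr hdet
  obtain ⟨i0, hi0⟩ := Function.ne_iff.mp hw0
  obtain ⟨u, hu⟩ := hsurj (Pi.single i0 1)
  rw [Matrix.mulVecLin_apply] at hu
  have h4 : w ⬝ᵥ h.mulVec u = w i0 := by rw [hu, dotProduct_single, mul_one]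
  rw [Matrix.dotProduct_mulVec, hwh, zero_dotProduct] at h4
  exact hi0 h4.symm

private theorem orbital_matball_compact (p : ℕ) [Fact p.Prime] (n : ℕ) (C : ℝ) :
    IsCompact {m : Matrix (Fin n) (Fin n) ℚ_[p] | ∀ i j, ‖m i j‖ ≤ C} := by
  have : {m : Matrix (Fin n) (Fin n) ℚ_[p] | ∀ i j, ‖m i j‖ ≤ C} =
      Set.pi Set.univ (fun _ : Fin n => Set.pi Set.univ
        (fun _ : Fin n => Metric.closedBall (0 : ℚ_[p]) C)) := by
    ext m
    constructor
    · intro h i _ j _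
      simpa [Metric.mem_closedBall, dist_zero_right] using h i j
    · intro h i j
      simpa [Metric.mem_closedBall, dist_zero_right] using h i (Set.mem_univ i) j (Set.mem_univ j)
  rw [this]
  exact isCompact_univ_pi fun i => isCompact_univ_pi fun j =>
    ProperSpace.isCompact_closedBall 0 C

private theorem orbital_matball_open (p : ℕ) [Fact p.Prime] (n : ℕ) :
    IsOpen {m : Matrix (Fin n) (Fin n) ℚ_[p] | ∀ i j, ‖m i j‖ ≤ 1} := by
  have : {m : Matrix (Fin n) (Fin n) ℚ_[p] | ∀ i j, ‖m i j‖ ≤ 1} =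
      ⋂ i, ⋂ j, (fun m : Matrix (Fin n) (Fin n) ℚ_[p] => m i j) ⁻¹' {x | ‖x‖ < (p : ℝ)} := by
    ext m
    simp only [Set.mem_setOf_eq, Set.mem_iInter, Set.mem_preimage]
    refine forall_congr' fun i => forall_congr' fun j => ?_
    have := Padic.norm_le_pow_iff_norm_lt_pow_add_one (m i j) 0
    rw [zpow_zero] at this
    rw [this, zero_add, zpow_one]
  rw [this]
  exact isOpen_iInter_of_finite fun i => isOpen_iInter_of_finite fun j =>
    (isOpen_lt continuous_norm continuous_const).preimage
      ((continuous_id.matrix_elem i j))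

set_option maxHeartbeats 1000000 in
private theorem orbital_bounded_aux (p : ℕ) [Fact p.Prime] (n : ℕ) (hn : 1 ≤ n)
    (X : Matrix (Fin n) (Fin n) ℚ_[p]) (hX : Irreducible X.charpoly)
    (D : Set (Matrix (Fin n) (Fin n) ℚ_[p])) (hD : IsCompact D) :
    ∃ C : ℝ, ∀ g : Matrix (Fin n) (Fin n) ℚ_[p], g.det = 1 →
      g.adjugate * X * g ∈ D → ∀ i j, ‖g i j‖ ≤ C := by
  classical
  by_contra hb
  push_neg at hb
  have hb' : ∀ k : ℕ, ∃ g : Matrix (Fin n) (Fin n) ℚ_[p], g.det = 1 ∧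
      g.adjugate * X * g ∈ D ∧ ∃ i j, ((k : ℝ) + 1) < ‖g i j‖ := by
    intro k
    obtain ⟨g, h1, h2, i, j, h3⟩ := hb ((k : ℝ) + 1)
    exact ⟨g, h1, h2, i, j, h3⟩
  choose g hgdet hgD a b hab using hb'
  have hmax : ∀ k, ∃ s : Fin n × Fin n, ∀ r : Fin n × Fin n, ‖g k r.1 r.2‖ ≤ ‖g k s.1 s.2‖ := by
    intro k
    obtain ⟨s, _, hs⟩ := Finset.exists_max_image Finset.univ
      (fun r : Fin n × Fin n => ‖g k r.1 r.2‖) ⟨(a k, b k), Finset.mem_univ _⟩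
    exact ⟨s, fun r => hs r (Finset.mem_univ r)⟩
  choose s hs using hmax
  set c : ℕ → ℚ_[p] := fun k => g k (s k).1 (s k).2 with hcdef
  have hcbig : ∀ k : ℕ, ((k : ℝ) + 1) < ‖c k‖ := fun k => lt_of_lt_of_le (hab k) (hs k (a k, b k))
  have hcpos : ∀ k, 0 < ‖c k‖ := fun k => lt_of_le_of_lt (by positivity) (hcbig k)
  have hcone : ∀ k, 1 ≤ ‖c k‖ := fun k => le_trans (by norm_num) (hcbig k).le
  have hc0 : ∀ k, c k ≠ 0 := fun k => norm_pos_iff.mp (hcpos k)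
  set hseq : ℕ → Matrix (Fin n) (Fin n) ℚ_[p] := fun k => (c k)⁻¹ • g k with hhdef
  set Yseq : ℕ → Matrix (Fin n) (Fin n) ℚ_[p] := fun k => (g k).adjugate * X * g k with hYdef
  have hXg : ∀ k, X * g k = g k * Yseq k := by
    intro k
    calc X * g k = (1 : Matrix (Fin n) (Fin n) ℚ_[p]) * (X * g k) := (one_mul _).symm
    _ = (g k * (g k).adjugate) * (X * g k) := by rw [Matrix.mul_adjugate, hgdet k, one_smul]
    _ = g k * Yseq k := by rw [hYdef, mul_assoc, ← mul_assoc ((g k).adjugate) X (g k)]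
  have hXh : ∀ k, X * hseq k = hseq k * Yseq k := by
    intro k
    rw [hhdef]
    simp only [mul_smul_comm, smul_mul_assoc]
    rw [hXg k]
  have hh1 : ∀ k, ∀ i j : Fin n, ‖hseq k i j‖ ≤ 1 := by
    intro k i j
    rw [hhdef]
    simp only [Matrix.smul_apply, smul_eq_mul, norm_mul, norm_inv]
    calc ‖c k‖⁻¹ * ‖g k i j‖ ≤ ‖c k‖⁻¹ * ‖c k‖ := by gcongr; exact hs k (i, j)
    _ = 1 := inv_mul_cancel₀ (ne_of_gt (hcpos k))
  have hhE : ∀ k, ∃ i j : Fin n, ‖hseq k i j‖ = 1 := by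
    intro k
    refine ⟨(s k).1, (s k).2, ?_⟩
    rw [hhdef]
    simp only [Matrix.smul_apply, smul_eq_mul]
    have : g k (s k).1 (s k).2 = c k := rfl
    rw [this, inv_mul_cancel₀ (hc0 k), norm_one]
  have hdeth : ∀ k : ℕ, ‖(hseq k).det‖ ≤ 1 / ((k : ℝ) + 1) := by
    intro k
    rw [hhdef]
    simp only [Matrix.det_smul, hgdet k, mul_one, Fintype.card_fin, norm_pow, norm_inv]
    rw [one_div]
    calc (‖c k‖⁻¹) ^ n ≤ ‖c k‖⁻¹ ^ 1 := by
          apply pow_le_pow_of_le_one (by positivity) _ hn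
          rw [inv_le_one_iff₀]; right; exact hcone k
    _ = ‖c k‖⁻¹ := pow_one _
    _ ≤ ((k : ℝ) + 1)⁻¹ := by
          apply inv_anti₀ (by positivity) (hcbig k).le
  have hEclosed : IsClosed {m : Matrix (Fin n) (Fin n) ℚ_[p] | ∃ i j, ‖m i j‖ = 1} := by
    have : {m : Matrix (Fin n) (Fin n) ℚ_[p] | ∃ i j, ‖m i j‖ = 1} =
        ⋃ i, ⋃ j, {m : Matrix (Fin n) (Fin n) ℚ_[p] | ‖m i j‖ = 1} := by
      ext m; simp [Set.mem_iUnion]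
    rw [this]
    exact isClosed_iUnion_of_finite fun i => isClosed_iUnion_of_finite fun j =>
      isClosed_eq (continuous_norm.comp (continuous_id.matrix_elem i j)) continuous_const
  have hBcomp : IsCompact ({m : Matrix (Fin n) (Fin n) ℚ_[p] | ∀ i j, ‖m i j‖ ≤ 1} ∩
      {m | ∃ i j, ‖m i j‖ = 1}) := (orbital_matball_compact p n 1).inter_right hEclosed
  have hprod := hBcomp.prod hD
  have hmem : ∀ k, (hseq k, Yseq k) ∈ (({m : Matrix (Fin n) (Fin n) ℚ_[p] | ∀ i j, ‖m i j‖ ≤ 1} ∩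
      {m | ∃ i j, ‖m i j‖ = 1}) ×ˢ D) := fun k => ⟨⟨hh1 k, hhE k⟩, hgD k⟩
  haveI : FirstCountableTopology (Matrix (Fin n) (Fin n) ℚ_[p]) :=
    inferInstanceAs (FirstCountableTopology (Fin n → Fin n → ℚ_[p]))
  obtain ⟨⟨h8, Y8⟩, hmem8, φ, hφ, hlim⟩ := hprod.tendsto_subseq hmem
  have hlim1 : Tendsto (fun k => hseq (φ k)) atTop (nhds h8) :=
    (continuous_fst.tendsto _).comp hlim
  have hlim2 : Tendsto (fun k => Yseq (φ k)) atTop (nhds Y8) :=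
    (continuous_snd.tendsto _).comp hlim
  have hXh8 : X * h8 = h8 * Y8 := by
    have t1 : Tendsto (fun k => X * hseq (φ k)) atTop (nhds (X * h8)) :=
      tendsto_const_nhds.mul hlim1
    have t2 : Tendsto (fun k => hseq (φ k) * Yseq (φ k)) atTop (nhds (h8 * Y8)) :=
      hlim1.mul hlim2
    have he : (fun k => X * hseq (φ k)) = fun k => hseq (φ k) * Yseq (φ k) :=
      funext fun k => hXh (φ k)
    exact tendsto_nhds_unique (he ▸ t1) t2
  have hdet8 : h8.det = 0 := by
    have t1 : Tendsto (fun k => (hseq (φ k)).det) atTop (nhds h8.det) :=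
      ((continuous_id.matrix_det).tendsto h8).comp hlim1
    have t2 : Tendsto (fun k => (hseq (φ k)).det) atTop (nhds 0) := by
      apply squeeze_zero_norm (a := fun k : ℕ => 1 / ((k : ℝ) + 1)) _
        tendsto_one_div_add_atTop_nhds_zero_nat
      intro k
      refine le_trans (hdeth (φ k)) ?_
      apply one_div_le_one_div_of_le (by positivity)
      have h5 : k ≤ φ k := hφ.le_apply
      have h6 : (k : ℝ) ≤ (φ k : ℝ) := Nat.cast_le.mpr h5
      linarith
    exact tendsto_nhds_unique t1 t2
  have hne8 : h8 ≠ 0 := by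
    obtain ⟨i, j, hij⟩ := hmem8.1.2
    intro h0
    rw [h0] at hij
    simp [Matrix.zero_apply] at hij
  exact orbital_no_singular_intertwiner p n hn X hX h8 Y8 hXh8 hdet8 hne8

/-- **Compactness of the set of group elements contributing to an orbital integral.**
Fix a prime `p` and `n ≥ 1`.  Let `X ∈ M_n(ℚ_p)` have irreducible characteristic
polynomial (so `X` is regular semisimple elliptic), and let `D ⊆ M_n(ℚ_p)` be compact.
Then `{g ∈ SL_n(ℚ_p) : g⁻¹ X g ∈ D}` is compact; in particular it is contained in a
finite union of double cosets `K a K`, where `K = SL_n(ℤ_p)` is the subgroup of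
`SL_n(ℚ_p)` of matrices with entries in `ℤ_p`. -/
theorem orbital_support_compact
    (p : ℕ) [Fact p.Prime] (n : ℕ) (hn : 1 ≤ n)
    (X : Matrix (Fin n) (Fin n) ℚ_[p]) (hX : Irreducible X.charpoly)
    (D : Set (Matrix (Fin n) (Fin n) ℚ_[p])) (hD : IsCompact D) :
    IsCompact {g : Matrix.SpecialLinearGroup (Fin n) ℚ_[p] |
        ((g⁻¹ : Matrix.SpecialLinearGroup (Fin n) ℚ_[p]) : Matrix (Fin n) (Fin n) ℚ_[p]) *
          X * (g : Matrix (Fin n) (Fin n) ℚ_[p]) ∈ D} ∧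
    ∃ s : Finset (Matrix.SpecialLinearGroup (Fin n) ℚ_[p]),
      {g : Matrix.SpecialLinearGroup (Fin n) ℚ_[p] |
        ((g⁻¹ : Matrix.SpecialLinearGroup (Fin n) ℚ_[p]) : Matrix (Fin n) (Fin n) ℚ_[p]) *
          X * (g : Matrix (Fin n) (Fin n) ℚ_[p]) ∈ D} ⊆
        ⋃ a ∈ s,
          ({k : Matrix.SpecialLinearGroup (Fin n) ℚ_[p] |
              ∀ i j, ‖(k : Matrix (Fin n) (Fin n) ℚ_[p]) i j‖ ≤ 1} * {a} *
            {k : Matrix.SpecialLinearGroup (Fin n) ℚ_[p] |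
              ∀ i j, ‖(k : Matrix (Fin n) (Fin n) ℚ_[p]) i j‖ ≤ 1}) := by
  classical
  set SL := Matrix.SpecialLinearGroup (Fin n) ℚ_[p] with hSL
  set S : Set SL := {g : SL |
      ((g⁻¹ : SL) : Matrix (Fin n) (Fin n) ℚ_[p]) *
        X * (g : Matrix (Fin n) (Fin n) ℚ_[p]) ∈ D} with hSdef
  set K : Set SL := {k : SL | ∀ i j, ‖(k : Matrix (Fin n) (Fin n) ℚ_[p]) i j‖ ≤ 1} with hKdef
  set A : Set (Matrix (Fin n) (Fin n) ℚ_[p]) :=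
    {m | m.det = 1 ∧ m.adjugate * X * m ∈ D} with hAdef
  have hemb : Topology.IsEmbedding (fun g : SL => (g : Matrix (Fin n) (Fin n) ℚ_[p])) := by
    exact ⟨⟨rfl⟩, fun x y hxy => Subtype.ext hxy⟩
  have hSA : (fun g : SL => (g : Matrix (Fin n) (Fin n) ℚ_[p])) '' S = A := by
    ext m
    constructor
    · rintro ⟨g, hg, rfl⟩
      refine ⟨g.2, ?_⟩
      rw [hSdef, Set.mem_setOf_eq, Matrix.SpecialLinearGroup.coe_inv] at hg
      exact hg
    · rintro ⟨hdet, hmem⟩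
      refine ⟨⟨m, hdet⟩, ?_, rfl⟩
      show (((⟨m, hdet⟩ : SL)⁻¹ : SL) : Matrix (Fin n) (Fin n) ℚ_[p]) * X * m ∈ D
      change m.adjugate * X * m ∈ D
      exact hmem
  have hAcomp : IsCompact A := by
    obtain ⟨C, hC⟩ := orbital_bounded_aux p n hn X hX D hD
    have hAclosed : IsClosed A := by
      have : A = ((fun m : Matrix (Fin n) (Fin n) ℚ_[p] => m.det) ⁻¹' {1}) ∩
          ((fun m : Matrix (Fin n) (Fin n) ℚ_[p] => m.adjugate * X * m) ⁻¹' D) := by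
        ext m; simp [hAdef]
      rw [this]
      exact IsClosed.inter (isClosed_singleton.preimage (continuous_id.matrix_det))
        ((hD.isClosed).preimage
          (((continuous_id.matrix_adjugate).matrix_mul continuous_const).matrix_mul
            continuous_id))
    exact (orbital_matball_compact p n C).of_isClosed_subset hAclosed
      (fun m hm i j => hC m hm.1 hm.2 i j)
  have hScomp : IsCompact S := hemb.isCompact_iff.mpr (hSA ▸ hAcomp)
  refine ⟨hScomp, ?_⟩
  have h1K : (1 : SL) ∈ K := by
    intro i j
    rw [Matrix.SpecialLinearGroup.coe_one, Matrix.one_apply]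
    split_ifs <;> simp
  have hopen : ∀ a : SL, IsOpen ({a} * K : Set SL) := by
    intro a
    have heq : ({a} * K : Set SL) =
        (fun x : SL => ((a⁻¹ : SL) : Matrix (Fin n) (Fin n) ℚ_[p]) *
          (x : Matrix (Fin n) (Fin n) ℚ_[p])) ⁻¹'
          {m : Matrix (Fin n) (Fin n) ℚ_[p] | ∀ i j, ‖m i j‖ ≤ 1} := by
      ext x
      rw [Set.singleton_mul]
      constructor
      · rintro ⟨k, hk, rfl⟩
        have h7 : ((a⁻¹ : SL) : Matrix (Fin n) (Fin n) ℚ_[p]) *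
            ((a * k : SL) : Matrix (Fin n) (Fin n) ℚ_[p]) =
            (k : Matrix (Fin n) (Fin n) ℚ_[p]) := by
          rw [← Matrix.SpecialLinearGroup.coe_mul, inv_mul_cancel_left]
        show _ ∈ Set.preimage _ _
        rw [Set.mem_preimage, Set.mem_setOf_eq, h7]
        exact hk
      · intro hx
        rw [Set.mem_preimage, Set.mem_setOf_eq] at hx
        refine ⟨a⁻¹ * x, ?_, mul_inv_cancel_left a x⟩
        intro i j
        rw [Matrix.SpecialLinearGroup.coe_mul]
        exact hx i j
    rw [heq]
    exact (orbital_matball_open p n).preimage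
      (continuous_const.matrix_mul hemb.continuous)
  have hcover : S ⊆ ⋃ a : SL, ({a} * K : Set SL) := by
    intro x _
    refine Set.mem_iUnion.mpr ⟨x, ?_⟩
    rw [Set.singleton_mul]
    exact ⟨1, h1K, mul_one x⟩
  obtain ⟨t, ht⟩ := hScomp.elim_finite_subcover (fun a : SL => ({a} * K : Set SL)) hopen hcover
  refine ⟨t, ?_⟩
  intro x hx
  obtain ⟨a, ha, hxa⟩ := Set.mem_iUnion₂.mp (ht hx)
  rw [Set.singleton_mul] at hxa
  obtain ⟨k, hk, rfl⟩ := hxa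
  refine Set.mem_iUnion₂.mpr ⟨a, ha, ?_⟩
  show a * k ∈ K * {a} * K
  have hmem2 : (1 : SL) * a * k ∈ K * {a} * K :=
    Set.mul_mem_mul (Set.mul_mem_mul h1K (Set.mem_singleton a)) hk
  simpa using hmem2
end
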